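/- Let f₁,…,f_m be quadratic polynomials on ℝⁿ, fᵢ(x) = aᵢ + bᵢᵀx + xᵀFᵢx, and let q(x) = c + dᵀx + xᵀQx with T = {x : q(x) ≥ 0} nonempty and compact. Define V = {(f₁(x),…,f_m(x)) : x ∈ T} ⊆ ℝᵐ and W = {(a₁+b₁ᵀx+F₁•X,…,a_m+b_mᵀx+F_m•X) : [[1,xᵀ],[x,X]] ⪰ 0, c+dᵀx+Q•X ≥ 0}. Then conv(V) = W. -/

import Mathlib

open Matrix Set

/-- Frobenius inner product `A • B = trace(AB)`. -/
noncomputable def frob {n : ℕ} (A B : Matrix (Fin n) (Fin n) ℝ) : ℝ := (A * B).trace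

/-- The moment matrix `[[1, xᵀ],[x, X]]`. -/
def momMat {n : ℕ} (x : Fin n → ℝ) (X : Matrix (Fin n) (Fin n) ℝ) :
    Matrix (Fin 1 ⊕ Fin n) (Fin 1 ⊕ Fin n) ℝ :=
  Matrix.fromBlocks 1 (Matrix.replicateRow (Fin 1) x) (Matrix.replicateCol (Fin 1) x) X


-- frob linearity and rank-one values
lemma frob_add {n : ℕ} (A X Y : Matrix (Fin n) (Fin n) ℝ) :
    frob A (X + Y) = frob A X + frob A Y := by
  simp [frob, Matrix.mul_add]

lemma frob_vecMulVec {n : ℕ} (A : Matrix (Fin n) (Fin n) ℝ) (v : Fin n → ℝ) :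
    frob A (vecMulVec v v) = v ⬝ᵥ A.mulVec v := by
  simp only [frob, Matrix.trace, Matrix.diag, Matrix.mul_apply, vecMulVec_apply,
    dotProduct, Matrix.mulVec, dotProduct]
  congr 1; ext i
  rw [Finset.mul_sum]
  congr 1; ext j; ring

lemma frob_sum {n k : ℕ} (A : Matrix (Fin n) (Fin n) ℝ) (w : Fin k → Matrix (Fin n) (Fin n) ℝ) :
    frob A (∑ i, w i) = ∑ i, frob A (w i) := by
  simp [frob, Matrix.mul_sum, Matrix.trace_sum]


-- quadratic form of momMat on Sum.elim t u
lemma momMat_qf {n : ℕ} (x : Fin n → ℝ) (X : Matrix (Fin n) (Fin n) ℝ)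
    (t : Fin 1 → ℝ) (u : Fin n → ℝ) :
    Sum.elim t u ⬝ᵥ (momMat x X).mulVec (Sum.elim t u) =
      (t 0) * (t 0) + (t 0) * (x ⬝ᵥ u) + (x ⬝ᵥ u) * (t 0) + u ⬝ᵥ X.mulVec u := by
  simp only [momMat, fromBlocks_mulVec, sumElim_dotProduct_sumElim]
  simp [Matrix.mulVec, Matrix.replicateRow_apply, Matrix.replicateCol_apply, dotProduct,
    Fin.sum_univ_one, add_mul, mul_add, Finset.mul_sum, Finset.sum_mul, mul_comm,
    Finset.sum_add_distrib]
  have h1 : (∑ j : Fin n, u j * (x j * t 0)) = ∑ j : Fin n, x j * u j * t 0 :=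
    Finset.sum_congr rfl fun i _ => by ring
  rw [h1]; ring

lemma dot_vecMulVec {n : ℕ} (x u : Fin n → ℝ) :
    u ⬝ᵥ (vecMulVec x x).mulVec u = (x ⬝ᵥ u) * (x ⬝ᵥ u) := by
  simp only [vecMulVec_apply, Matrix.mulVec, dotProduct, Finset.mul_sum, Finset.sum_mul]
  exact Finset.sum_congr rfl fun i _ => Finset.sum_congr rfl fun j _ => by ring

lemma vecMulVec_isHermitian {n : ℕ} (x : Fin n → ℝ) : (vecMulVec x x).IsHermitian := by
  ext i j
  simp [vecMulVec_apply, mul_comm]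

lemma psd_sub_of_momMat {n : ℕ} (x : Fin n → ℝ) (X : Matrix (Fin n) (Fin n) ℝ)
    (h : (momMat x X).PosSemidef) : (X - vecMulVec x x).PosSemidef := by
  have hX : X.IsHermitian := (isHermitian_fromBlocks_iff.mp h.1).2.2.2
  refine Matrix.PosSemidef.of_dotProduct_mulVec_nonneg (hX.sub (vecMulVec_isHermitian x)) fun u => ?_
  have h2 := h.dotProduct_mulVec_nonneg (Sum.elim (fun _ => -(x ⬝ᵥ u)) u)
  rw [star_trivial] at h2
  rw [momMat_qf] at h2
  rw [star_trivial, Matrix.sub_mulVec, dotProduct_sub, dot_vecMulVec]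
  nlinarith [h2]

lemma momMat_psd {n : ℕ} (x : Fin n → ℝ) (X : Matrix (Fin n) (Fin n) ℝ)
    (h : (X - vecMulVec x x).PosSemidef) : (momMat x X).PosSemidef := by
  have hX : X.IsHermitian := by
    have := h.1.add (vecMulVec_isHermitian x)
    simpa using this
  refine Matrix.PosSemidef.of_dotProduct_mulVec_nonneg ?_ ?_
  · refine Matrix.IsHermitian.fromBlocks ?_ ?_ hX
    · ext i j; simp [Matrix.one_apply]
      fin_cases i <;> fin_cases j <;> simp
    · ext i j; simp [Matrix.conjTranspose_replicateRow, Matrix.replicateRow_apply, Matrix.replicateCol_apply]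
  · intro z
    have hz : z = Sum.elim (z ∘ Sum.inl) (z ∘ Sum.inr) := (Sum.elim_comp_inl_inr z).symm
    rw [star_trivial, hz, momMat_qf]
    have h2 := h.dotProduct_mulVec_nonneg (z ∘ Sum.inr)
    rw [star_trivial, Matrix.sub_mulVec, dotProduct_sub, dot_vecMulVec] at h2
    nlinarith [h2, sq_nonneg ((z ∘ Sum.inl) 0 + x ⬝ᵥ z ∘ Sum.inr)]

lemma psd_decomp {n : ℕ} (Δ : Matrix (Fin n) (Fin n) ℝ) (h : Δ.PosSemidef) :
    ∃ w : Fin n → (Fin n → ℝ), Δ = ∑ i, vecMulVec (w i) (w i) := by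
  obtain ⟨B, hB⟩ : ∃ B : Matrix (Fin n) (Fin n) ℝ, Δ = Bᴴ * B := by
    open scoped MatrixOrder in
    obtain ⟨X, hX, -, rfl⟩ := CFC.exists_sqrt_of_isSelfAdjoint_of_quasispectrumRestricts
      h.isHermitian (QuasispectrumRestricts.nnreal_of_nonneg h.nonneg)
    exact ⟨X, by rw [← star_eq_conjTranspose, hX.star_eq]⟩
  refine ⟨fun i => B i, ?_⟩
  rw [hB]
  ext j k
  rw [Matrix.sum_apply]
  simp [Matrix.mul_apply, Matrix.conjTranspose_apply, vecMulVec_apply]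

lemma qf_expand {n : ℕ} (M : Matrix (Fin n) (Fin n) ℝ) (x v : Fin n → ℝ) (t : ℝ) :
    (x + t • v) ⬝ᵥ M.mulVec (x + t • v) =
      x ⬝ᵥ M.mulVec x + t * (x ⬝ᵥ M.mulVec v + v ⬝ᵥ M.mulVec x) + t ^ 2 * (v ⬝ᵥ M.mulVec v) := by
  simp only [Matrix.mulVec_add, Matrix.mulVec_smul, dotProduct_add, add_dotProduct,
    smul_dotProduct, dotProduct_smul, smul_eq_mul]
  ring

lemma negdef_of_compact {n : ℕ} (c : ℝ) (d : Fin n → ℝ) (Q : Matrix (Fin n) (Fin n) ℝ)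
    (hne : {x : Fin n → ℝ | 0 ≤ c + d ⬝ᵥ x + x ⬝ᵥ Q.mulVec x}.Nonempty)
    (hcpt : IsCompact {x : Fin n → ℝ | 0 ≤ c + d ⬝ᵥ x + x ⬝ᵥ Q.mulVec x}) :
    ∀ v : Fin n → ℝ, v ≠ 0 → v ⬝ᵥ Q.mulVec v < 0 := by
  intro v hv
  by_contra hA
  push_neg at hA
  obtain ⟨x₀, hx₀⟩ := hne
  -- choose direction u = ±v with nonnegative linear coefficient
  obtain ⟨u, hu, hAu, hLu⟩ : ∃ u : Fin n → ℝ, u ≠ 0 ∧ 0 ≤ u ⬝ᵥ Q.mulVec u ∧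
      0 ≤ d ⬝ᵥ u + (x₀ ⬝ᵥ Q.mulVec u + u ⬝ᵥ Q.mulVec x₀) := by
    rcases le_or_gt 0 (d ⬝ᵥ v + (x₀ ⬝ᵥ Q.mulVec v + v ⬝ᵥ Q.mulVec x₀)) with h | h
    · exact ⟨v, hv, hA, h⟩
    · refine ⟨-v, neg_ne_zero.mpr hv, ?_, ?_⟩
      · simp only [neg_dotProduct, Matrix.mulVec_neg, dotProduct_neg, neg_neg]; exact hA
      · simp only [dotProduct_neg, neg_dotProduct, Matrix.mulVec_neg]
        linarith
  -- the ray x₀ + t • u lies in the set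
  have hray : ∀ t : ℝ, 0 ≤ t → x₀ + t • u ∈ {x : Fin n → ℝ | 0 ≤ c + d ⬝ᵥ x + x ⬝ᵥ Q.mulVec x} := by
    intro t ht
    simp only [Set.mem_setOf_eq, dotProduct_add, dotProduct_smul, smul_eq_mul, qf_expand]
    have := hx₀
    simp only [Set.mem_setOf_eq] at this
    nlinarith [sq_nonneg t]
  obtain ⟨C, hC⟩ := (isBounded_iff_forall_norm_le).mp hcpt.isBounded
  have hunorm : 0 < ‖u‖ := norm_pos_iff.mpr hu
  set t : ℝ := (C + ‖x₀‖ + 1) / ‖u‖ with ht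
  have ht0 : 0 ≤ t := by
    have hC0 : 0 ≤ C := le_trans (norm_nonneg x₀) (hC x₀ hx₀)
    positivity
  have hmem := hray t ht0
  have hb := hC _ hmem
  have h1 : ‖t • u‖ ≤ ‖x₀ + t • u‖ + ‖x₀‖ := by
    have := norm_sub_le (x₀ + t • u) x₀
    simpa using this
  rw [norm_smul, Real.norm_eq_abs, abs_of_nonneg ht0, ht, div_mul_cancel₀ _ (ne_of_gt hunorm)] at h1
  linarith


lemma key_induction {n m : ℕ} (a : Fin m → ℝ) (b : Fin m → Fin n → ℝ)
    (F : Fin m → Matrix (Fin n) (Fin n) ℝ)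
    (c : ℝ) (d : Fin n → ℝ) (Q : Matrix (Fin n) (Fin n) ℝ)
    (hneg : ∀ v : Fin n → ℝ, v ≠ 0 → v ⬝ᵥ Q.mulVec v < 0)
    (V : Set (Fin m → ℝ))
    (hV : V = {y | ∃ x : Fin n → ℝ, 0 ≤ c + d ⬝ᵥ x + x ⬝ᵥ Q.mulVec x ∧
      y = fun i => a i + b i ⬝ᵥ x + x ⬝ᵥ (F i).mulVec x}) :
    ∀ (L : List (Fin n → ℝ)) (x : Fin n → ℝ),
      0 ≤ c + d ⬝ᵥ x + x ⬝ᵥ Q.mulVec x + (L.map fun v => v ⬝ᵥ Q.mulVec v).sum →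
      (fun i => a i + b i ⬝ᵥ x + x ⬝ᵥ (F i).mulVec x + (L.map fun v => v ⬝ᵥ (F i).mulVec v).sum)
        ∈ convexHull ℝ V := by
  subst hV
  intro L
  induction L with
  | nil =>
    intro x hx
    simp only [List.map_nil, List.sum_nil, add_zero] at hx ⊢
    exact subset_convexHull ℝ _ ⟨x, hx, rfl⟩
  | cons v L' ih =>
    intro x hx
    rcases eq_or_ne v 0 with rfl | hv
    · simp only [List.map_cons, List.sum_cons, zero_dotProduct, zero_add] at hx ⊢
      exact ih x hx
    · -- notation
      set A : ℝ := v ⬝ᵥ Q.mulVec v with hAdef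
      set B : ℝ := d ⬝ᵥ v + (x ⬝ᵥ Q.mulVec v + v ⬝ᵥ Q.mulVec x) with hBdef
      set C : ℝ := c + d ⬝ᵥ x + x ⬝ᵥ Q.mulVec x + (L'.map fun v => v ⬝ᵥ Q.mulVec v).sum with hCdef
      have hA : A < 0 := hneg v hv
      have hCA : 0 ≤ C + A := by
        simp only [List.map_cons, List.sum_cons] at hx
        linarith [hx]
      have hK : (0:ℝ) < C - A := by linarith
      set K : ℝ := C - A with hKdef
      set R : ℝ := Real.sqrt (B ^ 2 + K ^ 2) with hRdef
      have hR2 : R ^ 2 = B ^ 2 + K ^ 2 := Real.sq_sqrt (by positivity)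
      have hRB : |B| < R := by
        rw [← Real.sqrt_sq_eq_abs, hRdef]
        apply Real.sqrt_lt_sqrt (sq_nonneg B)
        nlinarith
      set s : ℝ := (B + R) / K with hsdef
      have hs : 0 < s := by
        apply div_pos _ hK
        cases abs_lt.mp hRB with
        | intro h1 h2 => linarith
      have hs2 : (0:ℝ) < s ^ 2 + 1 := by positivity
      -- the root identity : C + B s + A s² = C s² - B s + A
      have hK0 : K ≠ 0 := ne_of_gt hK
      have h1 : K * s = B + R := by rw [hsdef]; field_simp
      have h2 : (K * s) * (K * s) = (B + R) * (B + R) := by rw [h1]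
      have h3 : K * (-K * s ^ 2 + 2 * B * s + K) = 0 := by
        linear_combination (-1 : ℝ) * h2 + (2 * B) * h1 - hR2
      have h3' : -K * s ^ 2 + 2 * B * s + K = 0 := by
        rcases mul_eq_zero.mp h3 with h | h
        · exact absurd h hK0
        · exact h
      have hroot : C + B * s + A * s ^ 2 = C * s ^ 2 - B * s + A := by
        have hKd : K = C - A := hKdef
        linear_combination h3' - s ^ 2 * hKd + hKd
      -- nonnegativity of both values
      have hgs : 0 ≤ C + B * s + A * s ^ 2 := by nlinarith [hroot, hCA, hs2]
      have hhs : 0 ≤ C * s ^ 2 - B * s + A := by rw [← hroot]; exact hgs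
      -- φ(-1/s) ≥ 0
      have hphi1 : 0 ≤ C + B * (-(1/s)) + A * (-(1/s)) ^ 2 := by
        have hs0 : s ≠ 0 := ne_of_gt hs
        have : C + B * (-(1/s)) + A * (-(1/s)) ^ 2 = (C * s ^ 2 - B * s + A) / s ^ 2 := by
          field_simp; ring
        rw [this]
        positivity
      -- the two points
      have h₁ := ih (x + (-(1/s)) • v) (by
        rw [qf_expand, dotProduct_add, dotProduct_smul, smul_eq_mul]
        simp only [← hAdef]
        have : c + (d ⬝ᵥ x + (-(1/s)) * (d ⬝ᵥ v)) +
            (x ⬝ᵥ Q.mulVec x + (-(1/s)) * (x ⬝ᵥ Q.mulVec v + v ⬝ᵥ Q.mulVec x) + (-(1/s)) ^ 2 * A) +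
            (L'.map fun v => v ⬝ᵥ Q.mulVec v).sum
            = C + B * (-(1/s)) + A * (-(1/s)) ^ 2 := by rw [hCdef, hBdef]; ring
        rw [this]
        exact hphi1)
      have h₂ := ih (x + s • v) (by
        rw [qf_expand, dotProduct_add, dotProduct_smul, smul_eq_mul]
        simp only [← hAdef]
        have : c + (d ⬝ᵥ x + s * (d ⬝ᵥ v)) +
            (x ⬝ᵥ Q.mulVec x + s * (x ⬝ᵥ Q.mulVec v + v ⬝ᵥ Q.mulVec x) + s ^ 2 * A) +
            (L'.map fun v => v ⬝ᵥ Q.mulVec v).sum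
            = C + B * s + A * s ^ 2 := by rw [hCdef, hBdef]; ring
        rw [this]
        exact hgs)
      -- convex combination
      have hmem := (convex_convexHull ℝ _) h₁ h₂
        (le_of_lt (div_pos (by positivity) hs2) :
          (0:ℝ) ≤ s ^ 2 / (s ^ 2 + 1))
        (le_of_lt (div_pos one_pos hs2) : (0:ℝ) ≤ 1 / (s ^ 2 + 1))
        (by field_simp)
      clear_value s K R C B A
      convert hmem using 1
      funext i
      have hs0 : s ≠ 0 := ne_of_gt hs
      have e1 := qf_expand (F i) x v (-(1/s))
      have e2 := qf_expand (F i) x v s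
      have e3 : b i ⬝ᵥ (x + (-(1/s)) • v) = b i ⬝ᵥ x + (-(1/s)) * (b i ⬝ᵥ v) := by
        rw [dotProduct_add, dotProduct_smul, smul_eq_mul]
      have e4 : b i ⬝ᵥ (x + s • v) = b i ⬝ᵥ x + s * (b i ⬝ᵥ v) := by
        rw [dotProduct_add, dotProduct_smul, smul_eq_mul]
      simp only [Pi.add_apply, Pi.smul_apply, smul_eq_mul, List.map_cons, List.sum_cons,
        e1, e2, e3, e4]
      field_simp
      ring

lemma frob_smul {n : ℕ} (A X : Matrix (Fin n) (Fin n) ℝ) (p : ℝ) :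
    frob A (p • X) = p * frob A X := by
  simp [frob, Matrix.mul_smul]

lemma psd_smul' {k : Type*} [Fintype k] {M : Matrix k k ℝ} (h : M.PosSemidef) {p : ℝ}
    (hp : 0 ≤ p) : (p • M).PosSemidef := by
  refine Matrix.PosSemidef.of_dotProduct_mulVec_nonneg ?_ fun z => ?_
  · unfold Matrix.IsHermitian
    rw [Matrix.conjTranspose_smul, h.1]
    simp
  · rw [Matrix.smul_mulVec, dotProduct_smul, smul_eq_mul]
    exact mul_nonneg hp (h.dotProduct_mulVec_nonneg z)

lemma momMat_affine {n : ℕ} (x₁ x₂ : Fin n → ℝ) (X₁ X₂ : Matrix (Fin n) (Fin n) ℝ)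
    (p q : ℝ) (hpq : p + q = 1) :
    momMat (p • x₁ + q • x₂) (p • X₁ + q • X₂) = p • momMat x₁ X₁ + q • momMat x₂ X₂ := by
  ext i j
  rcases i with i | i <;> rcases j with j | j
  · simp only [momMat, Matrix.fromBlocks_apply₁₁, Matrix.add_apply, Matrix.smul_apply,
      smul_eq_mul, Matrix.one_apply]
    rcases eq_or_ne i j with rfl | hij
    · simp; linarith
    · simp [hij]
  · simp [momMat, Matrix.replicateRow_apply]
  · simp [momMat, Matrix.replicateCol_apply]
  · simp [momMat]

theorem stmt1 {n m : ℕ} (a : Fin m → ℝ) (b : Fin m → Fin n → ℝ)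
    (F : Fin m → Matrix (Fin n) (Fin n) ℝ) (hF : ∀ i, (F i).IsSymm)
    (c : ℝ) (d : Fin n → ℝ) (Q : Matrix (Fin n) (Fin n) ℝ) (hQ : Q.IsSymm)
    (T : Set (Fin n → ℝ)) (hT : T = {x | 0 ≤ c + d ⬝ᵥ x + x ⬝ᵥ Q.mulVec x})
    (hTne : T.Nonempty) (hTcpt : IsCompact T)
    (V W : Set (Fin m → ℝ))
    (hV : V = {y | ∃ x ∈ T, y = fun i => a i + b i ⬝ᵥ x + x ⬝ᵥ (F i).mulVec x})
    (hW : W = {y | ∃ (x : Fin n → ℝ) (X : Matrix (Fin n) (Fin n) ℝ),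
        X.IsSymm ∧ (momMat x X).PosSemidef ∧ 0 ≤ c + d ⬝ᵥ x + frob Q X ∧
        y = fun i => a i + b i ⬝ᵥ x + frob (F i) X}) :
    convexHull ℝ V = W := by
  subst hT hV hW
  apply le_antisymm
  · -- convexHull V ⊆ W
    apply convexHull_min
    · rintro y ⟨x, hx, rfl⟩
      refine ⟨x, vecMulVec x x, ?_, ?_, ?_, ?_⟩
      · ext i j; simp [Matrix.transpose_apply, vecMulVec_apply, mul_comm]
      · apply momMat_psd
        rw [sub_self]
        exact Matrix.PosSemidef.zero
      · rw [frob_vecMulVec]; exact hx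
      · funext i; rw [frob_vecMulVec]
    · rintro y₁ ⟨x₁, X₁, hs₁, hp₁, hc₁, rfl⟩ y₂ ⟨x₂, X₂, hs₂, hp₂, hc₂, rfl⟩ p q hp hq hpq
      refine ⟨p • x₁ + q • x₂, p • X₁ + q • X₂, ?_, ?_, ?_, ?_⟩
      · unfold Matrix.IsSymm
        rw [Matrix.transpose_add, Matrix.transpose_smul, Matrix.transpose_smul, hs₁, hs₂]
      · rw [momMat_affine _ _ _ _ _ _ hpq]
        exact (psd_smul' hp₁ hp).add (psd_smul' hp₂ hq)
      · rw [frob_add, frob_smul, frob_smul, dotProduct_add, dotProduct_smul, dotProduct_smul]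
        simp only [smul_eq_mul]
        have heq : c + (p * (d ⬝ᵥ x₁) + q * (d ⬝ᵥ x₂)) + (p * frob Q X₁ + q * frob Q X₂)
            = p * (c + d ⬝ᵥ x₁ + frob Q X₁) + q * (c + d ⬝ᵥ x₂ + frob Q X₂) := by
          linear_combination (-c) * hpq
        rw [heq]
        exact add_nonneg (mul_nonneg hp hc₁) (mul_nonneg hq hc₂)
      · funext i
        rw [frob_add, frob_smul, frob_smul]
        simp only [Pi.add_apply, Pi.smul_apply, smul_eq_mul, dotProduct_add, dotProduct_smul,
          smul_eq_mul]
        linear_combination (a i) * hpq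
  · -- W ⊆ convexHull V
    rintro y ⟨x, X, hsym, hpsd, hcon, rfl⟩
    have hneg := negdef_of_compact c d Q hTne hTcpt
    obtain ⟨w, hw⟩ := psd_decomp (X - vecMulVec x x) (psd_sub_of_momMat x X hpsd)
    have hX : X = vecMulVec x x + ∑ i, vecMulVec (w i) (w i) := by
      rw [← hw]; abel
    have hfr : ∀ M : Matrix (Fin n) (Fin n) ℝ,
        frob M X = x ⬝ᵥ M.mulVec x + ∑ i, w i ⬝ᵥ M.mulVec (w i) := by
      intro M
      rw [hX, frob_add, frob_vecMulVec, frob_sum]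
      simp [frob_vecMulVec]
    have hsum : ∀ g : (Fin n → ℝ) → ℝ,
        (((List.finRange n).map w).map g).sum = ∑ i, g (w i) := by
      intro g
      rw [List.map_map, ← Fin.sum_univ_def]
      simp [Function.comp]
    have hkey := key_induction a b F c d Q hneg _ rfl ((List.finRange n).map w) x (by
      rw [hsum]
      rw [hfr Q] at hcon
      linarith [hcon])
    convert hkey using 2 with i
    case e'_4 => rfl
    rw [hsum, hfr (F i)]
    ring
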